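/- arXiv:2109.04033 — 3 statements merged into one kernel-verified Lean document; each statement's English description precedes it below -/
import Mathlib

section
/- There exists a unique θ ∈ ℝ^q satisfying the projected Bellman fixed-point equation Φθ = Π(R + γ·P·Φθ), and this θ is the unique global minimizer of the mean-square projected Bellman error MSPBE(θ) := (1/2)‖Π(R + γPΦθ) − Φθ‖²_D. -/
/-!
Write `A = Φᵀ D (I - γ P) Φ` and `b = Φᵀ D R`. Since `Π Φ = Φ`, the projected Bellman residual is
`Π (R + γ P Φ θ) - Φ θ = Φ (Φᵀ D Φ)⁻¹ (b - A θ)`, and as `Φ` and `(Φᵀ D Φ)⁻¹` are injective it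
vanishes exactly when `A θ = b`. Stationarity of `d` and Jensen's inequality make `P` a
non-expansion for `‖·‖_D`, so `⟨y, P y⟩_D ≤ ‖y‖_D²` and `xᵀ A x ≥ (1 - γ) ‖Φ x‖_D² > 0`. Hence `A`
is invertible, `A θ = b` has exactly one solution, and the MSPBE vanishes there and is positive
everywhere else.
-/

open Matrix

/-- The `D`-weighted norm `‖x‖_D = √(xᵀ D x)` with `D = diag d`. -/
noncomputable def wNorm {S : Type*} [Fintype S] [DecidableEq S]
    (d : S → ℝ) (x : S → ℝ) : ℝ :=
  Real.sqrt (x ⬝ᵥ (Matrix.diagonal d *ᵥ x))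

section FullRank

variable {K m n : Type*} [Field K] [Fintype n]

theorem Matrix.mulVec_injective_of_rank_eq_card {A : Matrix m n K}
    (hA : A.rank = Fintype.card n) : Function.Injective A.mulVec := by
  have h := LinearMap.finrank_range_add_finrank_ker A.mulVecLin
  rw [Module.finrank_fintype_fun_eq_card] at h
  change A.rank + _ = _ at h
  exact LinearMap.ker_eq_bot.mp (Submodule.finrank_eq_zero.mp (by omega) :
    LinearMap.ker A.mulVecLin = ⊥)

end FullRank

section QuadraticForm

variable {K m n : Type*} [Field K] [Fintype m] [Fintype n]

theorem Matrix.isUnit_of_forall_dotProduct_mulVec_pos [Preorder K] [DecidableEq n]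
    {A : Matrix n n K} (hA : ∀ x ≠ 0, 0 < x ⬝ᵥ (A *ᵥ x)) : IsUnit A := by
  refine mulVec_injective_iff_isUnit.mp fun x y hxy => by_contra fun hne => ?_
  have := hA (x - y) (sub_ne_zero.mpr hne)
  rw [mulVec_sub, hxy, sub_self, dotProduct_zero] at this
  exact lt_irrefl 0 this

theorem Matrix.dotProduct_transpose_mul_mul_mulVec (B : Matrix m m K) (Φ : Matrix m n K)
    (x : n → K) : x ⬝ᵥ ((Φᵀ * B * Φ) *ᵥ x) = (Φ *ᵥ x) ⬝ᵥ (B *ᵥ (Φ *ᵥ x)) := by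
  rw [← mulVec_mulVec, ← mulVec_mulVec, dotProduct_mulVec, vecMul_transpose]

theorem Matrix.forall_dotProduct_transpose_mul_mul_mulVec_pos [LT K] {B : Matrix m m K}
    {Φ : Matrix m n K} (hB : ∀ y ≠ 0, 0 < y ⬝ᵥ (B *ᵥ y)) (hΦ : Function.Injective Φ.mulVec) :
    ∀ x ≠ 0, 0 < x ⬝ᵥ ((Φᵀ * B * Φ) *ᵥ x) := fun x hx => by
  rw [dotProduct_transpose_mul_mul_mulVec]
  exact hB _ fun h => hx (hΦ (h.trans (mulVec_zero Φ).symm))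

end QuadraticForm

section Weighted

variable {S : Type*} [Fintype S] [DecidableEq S] {d : S → ℝ}

theorem dotProduct_diagonal_mulVec_self_pos (hd : ∀ s, 0 < d s) {y : S → ℝ} (hy : y ≠ 0) :
    0 < y ⬝ᵥ (diagonal d *ᵥ y) := by
  simpa using (PosDef.diagonal hd).dotProduct_mulVec_pos hy

theorem two_mul_dotProduct_diagonal_mulVec_le (hd : ∀ s, 0 ≤ d s) (y z : S → ℝ) :
    2 * (y ⬝ᵥ (diagonal d *ᵥ z)) ≤ y ⬝ᵥ (diagonal d *ᵥ y) + z ⬝ᵥ (diagonal d *ᵥ z) := by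
  simp only [dotProduct, mulVec_diagonal, Finset.mul_sum, ← Finset.sum_add_distrib]
  exact Finset.sum_le_sum fun s _ => by nlinarith [mul_nonneg (hd s) (sq_nonneg (y s - z s))]

@[simp]
theorem wNorm_zero (d : S → ℝ) : wNorm d 0 = 0 := by
  simp [wNorm]

theorem wNorm_pos (hd : ∀ s, 0 < d s) {x : S → ℝ} (hx : x ≠ 0) : 0 < wNorm d x :=
  Real.sqrt_pos.mpr (dotProduct_diagonal_mulVec_self_pos hd hx)

end Weighted

section MarkovChain

variable {S : Type*} [Fintype S] {P : Matrix S S ℝ} {d : S → ℝ}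

theorem sq_mulVec_le_mulVec_sq (hP0 : ∀ i j, 0 ≤ P i j) (hP1 : ∀ i, ∑ j, P i j = 1)
    (y : S → ℝ) (s : S) : (P *ᵥ y) s ^ 2 ≤ (P *ᵥ (y ^ 2)) s :=
  Real.pow_arith_mean_le_arith_mean_pow_of_even _ _ _ (fun j _ => hP0 s j) (hP1 s) even_two

theorem dotProduct_diagonal_mulVec_self_mulVec_le [DecidableEq S] (hP0 : ∀ i j, 0 ≤ P i j)
    (hP1 : ∀ i, ∑ j, P i j = 1) (hstat : ∀ s', ∑ s, d s * P s s' = d s')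
    (hd : ∀ s, 0 ≤ d s) (y : S → ℝ) :
    (P *ᵥ y) ⬝ᵥ (diagonal d *ᵥ (P *ᵥ y)) ≤ y ⬝ᵥ (diagonal d *ᵥ y) := by
  have hquad (x : S → ℝ) : x ⬝ᵥ (diagonal d *ᵥ x) = d ⬝ᵥ x ^ 2 := by
    simp only [dotProduct, mulVec_diagonal, Pi.pow_apply]
    exact Finset.sum_congr rfl fun s _ => by ring
  calc (P *ᵥ y) ⬝ᵥ (diagonal d *ᵥ (P *ᵥ y)) = d ⬝ᵥ (P *ᵥ y) ^ 2 := hquad _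
    _ ≤ d ⬝ᵥ (P *ᵥ y ^ 2) :=
      dotProduct_le_dotProduct_of_nonneg_left (sq_mulVec_le_mulVec_sq hP0 hP1 y) hd
    _ = (d ᵥ* P) ⬝ᵥ y ^ 2 := dotProduct_mulVec _ _ _
    _ = y ⬝ᵥ (diagonal d *ᵥ y) := by rw [show d ᵥ* P = d from funext hstat, hquad]

theorem dotProduct_diagonal_mulVec_mulVec_le [DecidableEq S] (hP0 : ∀ i j, 0 ≤ P i j)
    (hP1 : ∀ i, ∑ j, P i j = 1) (hstat : ∀ s', ∑ s, d s * P s s' = d s')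
    (hd : ∀ s, 0 ≤ d s) (y : S → ℝ) :
    y ⬝ᵥ (diagonal d *ᵥ (P *ᵥ y)) ≤ y ⬝ᵥ (diagonal d *ᵥ y) := by
  linarith [two_mul_dotProduct_diagonal_mulVec_le hd y (P *ᵥ y),
    dotProduct_diagonal_mulVec_self_mulVec_le hP0 hP1 hstat hd y]

theorem dotProduct_diagonal_mul_one_sub_smul_mulVec_pos [DecidableEq S] (hP0 : ∀ i j, 0 ≤ P i j)
    (hP1 : ∀ i, ∑ j, P i j = 1) (hstat : ∀ s', ∑ s, d s * P s s' = d s')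
    (hd : ∀ s, 0 < d s) {γ : ℝ} (hγ0 : 0 ≤ γ) (hγ1 : γ < 1) {y : S → ℝ} (hy : y ≠ 0) :
    0 < y ⬝ᵥ ((diagonal d * (1 - γ • P)) *ᵥ y) := by
  have hPy := dotProduct_diagonal_mulVec_mulVec_le hP0 hP1 hstat (fun s => (hd s).le) y
  have hy' := dotProduct_diagonal_mulVec_self_pos hd hy
  rw [mul_sub, mul_one, mul_smul_comm, sub_mulVec, smul_mulVec, ← mulVec_mulVec,
    dotProduct_sub, dotProduct_smul, smul_eq_mul]
  nlinarith

end MarkovChain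

section Projection

variable {K S ι : Type*} [Field K] [Fintype S] [DecidableEq S] [Fintype ι] [DecidableEq ι]

theorem proj_bellman_residual_eq_zero_iff {W P : Matrix S S K} {Φ : Matrix S ι K}
    (hΦ : Function.Injective Φ.mulVec) (hG : IsUnit (Φᵀ * W * Φ)) (R : S → K) (γ : K)
    (θ : ι → K) :
    (Φ * (Φᵀ * W * Φ)⁻¹ * Φᵀ * W) *ᵥ (R + γ • (P *ᵥ (Φ *ᵥ θ))) - Φ *ᵥ θ = 0 ↔
      (Φᵀ * (W * (1 - γ • P)) * Φ) *ᵥ θ = Φᵀ *ᵥ (W *ᵥ R) := by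
  have hΦθ : (Φ * (Φᵀ * W * Φ)⁻¹ * Φᵀ * W) *ᵥ (Φ *ᵥ θ) = Φ *ᵥ θ := by
    have h := congrArg (fun M => Φ *ᵥ (M *ᵥ θ))
      (nonsing_inv_mul _ ((isUnit_iff_isUnit_det _).mp hG))
    simpa only [← mulVec_mulVec, one_mulVec] using h
  have hres : (Φ * (Φᵀ * W * Φ)⁻¹ * Φᵀ * W) *ᵥ (R + γ • (P *ᵥ (Φ *ᵥ θ))) - Φ *ᵥ θ =
      Φ *ᵥ ((Φᵀ * W * Φ)⁻¹ *ᵥ (Φᵀ *ᵥ (W *ᵥ R) - (Φᵀ * (W * (1 - γ • P)) * Φ) *ᵥ θ)) := by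
    nth_rewrite 2 [← hΦθ]
    simp only [mul_sub, mul_one, mul_smul_comm, sub_mulVec, smul_mulVec, mulVec_add, mulVec_sub,
      mulVec_smul, ← mulVec_mulVec]
    abel
  have hGinj : Function.Injective (Φᵀ * W * Φ)⁻¹.mulVec :=
    mulVec_injective_iff_isUnit.mpr (isUnit_nonsing_inv_iff.mpr hG)
  rw [hres, ← mulVec_zero Φ, hΦ.eq_iff, ← mulVec_zero (Φᵀ * W * Φ)⁻¹, hGinj.eq_iff, sub_eq_zero,
    eq_comm]

end Projection

theorem stmt_4_general {S : Type*} [Fintype S] [DecidableEq S]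
    (q : ℕ)
    (P : Matrix S S ℝ)
    (hP0 : ∀ i j, 0 ≤ P i j) (hP1 : ∀ i, ∑ j, P i j = 1)
    (d : S → ℝ) (hd : ∀ s, 0 < d s)
    (hstat : ∀ s', ∑ s, d s * P s s' = d s')
    (γ : ℝ) (hγ0 : 0 < γ) (hγ1 : γ < 1) (R : S → ℝ)
    (Φ : Matrix S (Fin q) ℝ) (hΦ : Φ.rank = q)
    (Proj : Matrix S S ℝ)
    (hProj : Proj = Φ * (Φᵀ * Matrix.diagonal d * Φ)⁻¹ * Φᵀ * Matrix.diagonal d)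
    (MSPBE : (Fin q → ℝ) → ℝ)
    (hMSPBE : ∀ θ, MSPBE θ =
      (1 / 2) * wNorm d (Proj *ᵥ (R + γ • (P *ᵥ (Φ *ᵥ θ))) - Φ *ᵥ θ) ^ 2) :
    ∃ θs : Fin q → ℝ,
      (Φ *ᵥ θs = Proj *ᵥ (R + γ • (P *ᵥ (Φ *ᵥ θs)))) ∧
      (∀ θ : Fin q → ℝ, Φ *ᵥ θ = Proj *ᵥ (R + γ • (P *ᵥ (Φ *ᵥ θ))) → θ = θs) ∧
      (∀ θ : Fin q → ℝ, θ ≠ θs → MSPBE θs < MSPBE θ) := by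
  subst hProj
  have hΦinj : Function.Injective Φ.mulVec :=
    mulVec_injective_of_rank_eq_card (by rw [hΦ, Fintype.card_fin])
  have hG : IsUnit (Φᵀ * diagonal d * Φ) :=
    isUnit_of_forall_dotProduct_mulVec_pos <| forall_dotProduct_transpose_mul_mul_mulVec_pos
      (fun _ hy => dotProduct_diagonal_mulVec_self_pos hd hy) hΦinj
  have hA : IsUnit (Φᵀ * (diagonal d * (1 - γ • P)) * Φ) :=
    isUnit_of_forall_dotProduct_mulVec_pos <| forall_dotProduct_transpose_mul_mul_mulVec_pos
      (fun _ hy => dotProduct_diagonal_mul_one_sub_smul_mulVec_pos hP0 hP1 hstat hd hγ0.le hγ1 hy)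
      hΦinj
  obtain ⟨θs, hθs⟩ := mulVec_surjective_iff_isUnit.mpr hA (Φᵀ *ᵥ (diagonal d *ᵥ R))
  have hres (θ : Fin q → ℝ) : (Φ * (Φᵀ * diagonal d * Φ)⁻¹ * Φᵀ * diagonal d) *ᵥ
      (R + γ • (P *ᵥ (Φ *ᵥ θ))) - Φ *ᵥ θ = 0 ↔ θ = θs := by
    rw [proj_bellman_residual_eq_zero_iff hΦinj hG, ← hθs,
      (mulVec_injective_iff_isUnit.mpr hA).eq_iff]
  refine ⟨θs, (sub_eq_zero.mp ((hres θs).mpr rfl)).symm,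
    fun θ hθ => (hres θ).mp (sub_eq_zero.mpr hθ.symm), fun θ hθ => ?_⟩
  have hpos := wNorm_pos hd (mt (hres θ).mp hθ)
  rw [hMSPBE, hMSPBE, (hres θs).mpr rfl, wNorm_zero]
  nlinarith

/-- There is a unique `θ` satisfying the projected Bellman fixed-point equation
`Φθ = Π (R + γ P Φ θ)`, and it is the unique global minimizer of
`MSPBE(θ) = (1/2) ‖Π (R + γ P Φ θ) − Φ θ‖²_D`. -/
theorem stmt_4 {S : Type*} [Fintype S] [DecidableEq S] [Nonempty S]
    (q : ℕ) (hq : 0 < q)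
    (P : Matrix S S ℝ)
    (hP0 : ∀ i j, 0 ≤ P i j) (hP1 : ∀ i, ∑ j, P i j = 1)
    (d : S → ℝ) (hd : ∀ s, 0 < d s)
    (hstat : ∀ s', ∑ s, d s * P s s' = d s')
    (γ : ℝ) (hγ0 : 0 < γ) (hγ1 : γ < 1) (R : S → ℝ)
    (Φ : Matrix S (Fin q) ℝ) (hΦ : Φ.rank = q)
    (Proj : Matrix S S ℝ)
    (hProj : Proj = Φ * (Φᵀ * Matrix.diagonal d * Φ)⁻¹ * Φᵀ * Matrix.diagonal d)
    (MSPBE : (Fin q → ℝ) → ℝ)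
    (hMSPBE : ∀ θ, MSPBE θ =
      (1 / 2) * wNorm d (Proj *ᵥ (R + γ • (P *ᵥ (Φ *ᵥ θ))) - Φ *ᵥ θ) ^ 2) :
    ∃ θs : Fin q → ℝ,
      (Φ *ᵥ θs = Proj *ᵥ (R + γ • (P *ᵥ (Φ *ᵥ θs)))) ∧
      (∀ θ : Fin q → ℝ, Φ *ᵥ θ = Proj *ᵥ (R + γ • (P *ᵥ (Φ *ᵥ θ))) → θ = θs) ∧
      (∀ θ : Fin q → ℝ, θ ≠ θs → MSPBE θs < MSPBE θ) :=
  stmt_4_general q P hP0 hP1 d hd hstat γ hγ0 hγ1 R Φ hΦ Proj hProj MSPBE hMSPBE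
end

section
/- For every θ ∈ ℝ^q, writing δ(θ) := Φᵀ D (R + γPΦθ − Φθ), the conjugate (Fenchel dual) representation of the mean-square projected Bellman error holds: (1/2)‖Π(R + γPΦθ) − Φθ‖²_D = sup over λ ∈ ℝ^q of [λᵀ δ(θ) − (1/2) λᵀ Φᵀ D Φ λ], and the supremum is attained uniquely at λ = (Φᵀ D Φ)⁻¹ δ(θ). -/
/-!
Write `M = Φᵀ D Φ`, which is positive definite because `D` is and `Φ` is injective. The projected
residual is `Π(R + γPΦθ) − Φθ = Φ M⁻¹ δ(θ)`, so its squared `D`-norm is `λ*ᵀ M λ*` with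
`λ* = M⁻¹ δ(θ)`. Completing the square,
`λᵀ δ − ½ λᵀ M λ = ½ λ*ᵀ M λ* − ½ (λ − λ*)ᵀ M (λ − λ*)`,
and positive definiteness of `M` makes `λ*` the unique maximiser.
-/

open Matrix

theorem wNorm_sq {S : Type*} [Fintype S] [DecidableEq S] {d : S → ℝ} (hd : ∀ s, 0 ≤ d s)
    (x : S → ℝ) : wNorm d x ^ 2 = x ⬝ᵥ (diagonal d *ᵥ x) :=
  Real.sq_sqrt <| by simpa using (PosSemidef.diagonal hd).dotProduct_mulVec_nonneg x

namespace Matrix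

variable {m n : Type*} [Fintype n]

theorem mulVec_injective_of_rank_eq_card_s12 {K : Type*} [Field K] {A : Matrix m n K}
    (h : A.rank = Fintype.card n) : Function.Injective A.mulVec := by
  rw [mulVec_injective_iff, linearIndependent_iff_card_eq_finrank_span, ← h,
    rank_eq_finrank_span_cols, Set.finrank]

theorem posDef_transpose_mul_diagonal_mul [Fintype m] [DecidableEq m] {d : m → ℝ}
    (hd : ∀ i, 0 < d i) {Φ : Matrix m n ℝ} (hΦ : Function.Injective Φ.mulVec) :
    (Φᵀ * diagonal d * Φ).PosDef := by
  simpa only [conjTranspose_eq_transpose_of_trivial] using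
    (PosDef.diagonal hd).conjTranspose_mul_mul_same hΦ

theorem dotProduct_transpose_mul_mul_mulVec_s12 [Fintype m] {R : Type*} [CommSemiring R]
    (A : Matrix m m R) (B : Matrix m n R) (x y : n → R) :
    x ⬝ᵥ ((Bᵀ * A * B) *ᵥ y) = (B *ᵥ x) ⬝ᵥ (A *ᵥ (B *ᵥ y)) := by
  rw [Matrix.mul_assoc, ← mulVec_mulVec, dotProduct_mulVec, vecMul_transpose, mulVec_mulVec]

theorem dotProduct_mulVec_comm_of_isSymm {R : Type*} [CommSemiring R] {M : Matrix n n R}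
    (hM : M.IsSymm) (x y : n → R) : x ⬝ᵥ (M *ᵥ y) = y ⬝ᵥ (M *ᵥ x) := by
  rw [dotProduct_mulVec, ← mulVec_transpose, hM.eq, dotProduct_comm]

theorem mul_inv_mul_transpose_mul_mulVec_sub [DecidableEq n] [Fintype m] {R : Type*} [CommRing R]
    (Φ : Matrix m n R) (W : Matrix m m R) (hu : IsUnit (Φᵀ * W * Φ).det) (v : m → R) (θ : n → R) :
    (Φ * (Φᵀ * W * Φ)⁻¹ * Φᵀ * W) *ᵥ v - Φ *ᵥ θ =
      Φ *ᵥ ((Φᵀ * W * Φ)⁻¹ *ᵥ ((Φᵀ * W) *ᵥ (v - Φ *ᵥ θ))) := by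
  have hθ : θ = (Φᵀ * W * Φ)⁻¹ *ᵥ ((Φᵀ * W) *ᵥ (Φ *ᵥ θ)) := by
    rw [mulVec_mulVec, mulVec_mulVec, Matrix.mul_assoc, nonsing_inv_mul _ hu, one_mulVec]
  conv_lhs => rw [hθ]
  simp only [mulVec_sub, mulVec_mulVec, Matrix.mul_assoc]

section DualObjective

variable [DecidableEq n]

noncomputable def dualObjective (M : Matrix n n ℝ) (δ x : n → ℝ) : ℝ :=
  x ⬝ᵥ δ - 1 / 2 * (x ⬝ᵥ (M *ᵥ x))

variable {M : Matrix n n ℝ}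

theorem dualObjective_inv_mulVec (hu : IsUnit M.det) (δ : n → ℝ) :
    dualObjective M δ (M⁻¹ *ᵥ δ) = 1 / 2 * ((M⁻¹ *ᵥ δ) ⬝ᵥ (M *ᵥ (M⁻¹ *ᵥ δ))) := by
  rw [dualObjective, mulVec_mulVec, mul_nonsing_inv _ hu, one_mulVec]
  ring

theorem dualObjective_eq_sub (hM : M.IsSymm) (hu : IsUnit M.det) (δ x : n → ℝ) :
    dualObjective M δ x = dualObjective M δ (M⁻¹ *ᵥ δ) -
      1 / 2 * ((x - M⁻¹ *ᵥ δ) ⬝ᵥ (M *ᵥ (x - M⁻¹ *ᵥ δ))) := by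
  set y := M⁻¹ *ᵥ δ
  have hδ : δ = M *ᵥ y := by rw [mulVec_mulVec, mul_nonsing_inv _ hu, one_mulVec]
  rw [dualObjective, dualObjective, hδ, mulVec_sub, dotProduct_sub, sub_dotProduct,
    sub_dotProduct, dotProduct_mulVec_comm_of_isSymm hM y x]
  ring

theorem PosDef.dualObjective_le (hM : M.PosDef) (δ x : n → ℝ) :
    dualObjective M δ x ≤ dualObjective M δ (M⁻¹ *ᵥ δ) := by
  rw [dualObjective_eq_sub (isHermitian_iff_isSymm.mp hM.isHermitian)
    ((isUnit_iff_isUnit_det M).mp hM.isUnit) δ x]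
  have := hM.posSemidef.dotProduct_mulVec_nonneg (x - M⁻¹ *ᵥ δ)
  simp only [star_trivial] at this
  linarith

theorem PosDef.eq_inv_mulVec_of_dualObjective_eq (hM : M.PosDef) {δ x : n → ℝ}
    (h : dualObjective M δ x = dualObjective M δ (M⁻¹ *ᵥ δ)) : x = M⁻¹ *ᵥ δ := by
  rw [dualObjective_eq_sub (isHermitian_iff_isSymm.mp hM.isHermitian)
    ((isUnit_iff_isUnit_det M).mp hM.isUnit) δ x] at h
  by_contra hne
  have := hM.dotProduct_mulVec_pos (sub_ne_zero.mpr hne)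
  simp only [star_trivial] at this
  linarith

end DualObjective

end Matrix

theorem stmt_12_general {S : Type*} [Fintype S] [DecidableEq S]
    (q : ℕ)
    (P : Matrix S S ℝ) (γ : ℝ) (R : S → ℝ)
    (d : S → ℝ) (hd : ∀ s, 0 < d s)
    (Φ : Matrix S (Fin q) ℝ) (hΦ : Φ.rank = q)
    (Proj : Matrix S S ℝ)
    (hProj : Proj = Φ * (Φᵀ * Matrix.diagonal d * Φ)⁻¹ * Φᵀ * Matrix.diagonal d)
    (δ : (Fin q → ℝ) → (Fin q → ℝ))
    (hδ : ∀ θ, δ θ =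
      (Φᵀ * Matrix.diagonal d) *ᵥ (R + γ • (P *ᵥ (Φ *ᵥ θ)) - Φ *ᵥ θ))
    (F : (Fin q → ℝ) → (Fin q → ℝ) → ℝ)
    (hF : ∀ θ lam, F θ lam =
      lam ⬝ᵥ δ θ - (1 / 2) * (lam ⬝ᵥ ((Φᵀ * Matrix.diagonal d * Φ) *ᵥ lam))) :
    ∀ θ : Fin q → ℝ,
      (∀ lam : Fin q → ℝ, F θ lam ≤
        (1 / 2) * wNorm d (Proj *ᵥ (R + γ • (P *ᵥ (Φ *ᵥ θ))) - Φ *ᵥ θ) ^ 2) ∧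
      F θ ((Φᵀ * Matrix.diagonal d * Φ)⁻¹ *ᵥ δ θ) =
        (1 / 2) * wNorm d (Proj *ᵥ (R + γ • (P *ᵥ (Φ *ᵥ θ))) - Φ *ᵥ θ) ^ 2 ∧
      (∀ lam : Fin q → ℝ,
        F θ lam = (1 / 2) * wNorm d (Proj *ᵥ (R + γ • (P *ᵥ (Φ *ᵥ θ))) - Φ *ᵥ θ) ^ 2 →
        lam = (Φᵀ * Matrix.diagonal d * Φ)⁻¹ *ᵥ δ θ) := by
  intro θ
  set M := Φᵀ * Matrix.diagonal d * Φ
  have hM : M.PosDef := posDef_transpose_mul_diagonal_mul hd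
    (mulVec_injective_of_rank_eq_card_s12 (hΦ.trans (Fintype.card_fin q).symm))
  have hMu : IsUnit M.det := (isUnit_iff_isUnit_det M).mp hM.isUnit
  have hvalue : (1 / 2) * wNorm d (Proj *ᵥ (R + γ • (P *ᵥ (Φ *ᵥ θ))) - Φ *ᵥ θ) ^ 2 =
      dualObjective M (δ θ) (M⁻¹ *ᵥ δ θ) := by
    rw [dualObjective_inv_mulVec hMu, wNorm_sq (fun s => (hd s).le), hProj,
      mul_inv_mul_transpose_mul_mulVec_sub _ _ hMu, ← hδ, dotProduct_transpose_mul_mul_mulVec_s12]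
  rw [hvalue, show F θ = dualObjective M (δ θ) from funext (hF θ)]
  exact ⟨hM.dualObjective_le _, rfl, fun _ => hM.eq_inv_mulVec_of_dualObjective_eq⟩

/-- Fenchel-dual representation of the MSPBE: with `δ(θ) = Φᵀ D (R + γPΦθ − Φθ)`,
`(1/2)‖Π(R + γPΦθ) − Φθ‖²_D = sup_λ [λᵀ δ(θ) − (1/2) λᵀ Φᵀ D Φ λ]`, and the
supremum is attained uniquely at `λ = (Φᵀ D Φ)⁻¹ δ(θ)`. -/
theorem stmt_12 {S : Type*} [Fintype S] [DecidableEq S] [Nonempty S]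
    (q : ℕ) (hq : 0 < q)
    (P : Matrix S S ℝ) (γ : ℝ) (R : S → ℝ)
    (d : S → ℝ) (hd : ∀ s, 0 < d s)
    (Φ : Matrix S (Fin q) ℝ) (hΦ : Φ.rank = q)
    (Proj : Matrix S S ℝ)
    (hProj : Proj = Φ * (Φᵀ * Matrix.diagonal d * Φ)⁻¹ * Φᵀ * Matrix.diagonal d)
    (δ : (Fin q → ℝ) → (Fin q → ℝ))
    (hδ : ∀ θ, δ θ =
      (Φᵀ * Matrix.diagonal d) *ᵥ (R + γ • (P *ᵥ (Φ *ᵥ θ)) - Φ *ᵥ θ))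
    (F : (Fin q → ℝ) → (Fin q → ℝ) → ℝ)
    (hF : ∀ θ lam, F θ lam =
      lam ⬝ᵥ δ θ - (1 / 2) * (lam ⬝ᵥ ((Φᵀ * Matrix.diagonal d * Φ) *ᵥ lam))) :
    ∀ θ : Fin q → ℝ,
      (∀ lam : Fin q → ℝ, F θ lam ≤
        (1 / 2) * wNorm d (Proj *ᵥ (R + γ • (P *ᵥ (Φ *ᵥ θ))) - Φ *ᵥ θ) ^ 2) ∧
      F θ ((Φᵀ * Matrix.diagonal d * Φ)⁻¹ *ᵥ δ θ) =
        (1 / 2) * wNorm d (Proj *ᵥ (R + γ • (P *ᵥ (Φ *ᵥ θ))) - Φ *ᵥ θ) ^ 2 ∧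
      (∀ lam : Fin q → ℝ,
        F θ lam = (1 / 2) * wNorm d (Proj *ᵥ (R + γ • (P *ᵥ (Φ *ᵥ θ))) - Φ *ᵥ θ) ^ 2 →
        lam = (Φᵀ * Matrix.diagonal d * Φ)⁻¹ *ᵥ δ θ) :=
  stmt_12_general q P γ R d hd Φ hΦ Proj hProj δ hδ F hF
end

section
/- Let B be a symmetric positive definite q×q real matrix, C an arbitrary q×q real matrix, and σ > 0 a real number. Then the 2q×2q real block matrix M_σ = [[−B, −Cᵀ], [C, −σB]] is Hurwitz: every eigenvalue μ ∈ ℂ of M_σ has strictly negative real part. (This is the system matrix of the primal-dual gradient dynamics of the doubly regularized Lagrangian underlying GTD4, with B = Φᵀ D Φ and C = Φᵀ D (γP − I) Φ.) -/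
open Matrix
open scoped ComplexOrder

/-!
Since the off-diagonal blocks `-Cᵀ` and `C` are skew to each other, the real quadratic form of
`M_σ` is `(x, y) ↦ -xᵀBx - σ yᵀBy`, which is negative definite. For a complex eigenvector
`v = a + i b` of `M_σ` with eigenvalue `μ`, the real part of `v* M_σ v` is then both
`aᵀM_σa + bᵀM_σb < 0` and `Re μ · ‖v‖²`.
-/

lemma add_neg_of_ne_zero_or {α β : Type*} [Zero α] [Zero β] {f : α → ℝ} {g : β → ℝ}
    (hf : ∀ a, a ≠ 0 → f a < 0) (hg : ∀ b, b ≠ 0 → g b < 0) (hf0 : f 0 = 0) (hg0 : g 0 = 0)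
    {a : α} {b : β} (hab : a ≠ 0 ∨ b ≠ 0) : f a + g b < 0 := by
  have hf' : f a ≤ 0 := (eq_or_ne a 0).elim (fun ha => ha ▸ hf0.le) fun ha => (hf a ha).le
  have hg' : g b ≤ 0 := (eq_or_ne b 0).elim (fun hb => hb ▸ hg0.le) fun hb => (hg b hb).le
  rcases hab with ha | hb
  · linarith [hf a ha]
  · linarith [hg b hb]

theorem RCLike.re_lt_zero_of_isRoot_charpoly {𝕜 n : Type*} [RCLike 𝕜] [Fintype n]
    [DecidableEq n] {M : Matrix n n 𝕜}
    (hM : ∀ v : n → 𝕜, v ≠ 0 → RCLike.re (star v ⬝ᵥ M *ᵥ v) < 0)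
    {μ : 𝕜} (hμ : M.charpoly.IsRoot μ) : RCLike.re μ < 0 := by
  rw [← charpoly_toLin', ← Module.End.hasEigenvalue_iff_isRoot_charpoly] at hμ
  obtain ⟨v, hv⟩ := hμ.exists_hasEigenvector
  have hre := hM v hv.2
  rw [← toLin'_apply, hv.apply_eq_smul, dotProduct_smul, smul_eq_mul, RCLike.mul_re] at hre
  obtain ⟨hnorm, hnorm_im⟩ := RCLike.pos_iff.mp (dotProduct_star_self_pos_iff.mpr hv.2)
  rw [hnorm_im, mul_zero, sub_zero] at hre
  exact neg_of_mul_neg_left hre hnorm.le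

lemma Complex.re_star_dotProduct_map_ofReal_mulVec {n : Type*} [Fintype n]
    (A : Matrix n n ℝ) (v : n → ℂ) :
    (star v ⬝ᵥ A.map Complex.ofReal *ᵥ v).re
      = (fun i => (v i).re) ⬝ᵥ A *ᵥ (fun i => (v i).re)
        + (fun i => (v i).im) ⬝ᵥ A *ᵥ (fun i => (v i).im) := by
  simp only [dotProduct, mulVec, map_apply, Pi.star_apply, Finset.mul_sum, Complex.re_sum,
    ← Finset.sum_add_distrib]
  refine Finset.sum_congr rfl fun i _ => Finset.sum_congr rfl fun j _ => ?_
  simp only [Complex.mul_re, Complex.mul_im, Complex.star_def, Complex.conj_re, Complex.conj_im,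
    Complex.ofReal_re, Complex.ofReal_im]
  ring

lemma Complex.re_star_dotProduct_map_ofReal_mulVec_neg {n : Type*} [Fintype n]
    {A : Matrix n n ℝ} (hA : ∀ x : n → ℝ, x ≠ 0 → x ⬝ᵥ A *ᵥ x < 0)
    (v : n → ℂ) (hv : v ≠ 0) : (star v ⬝ᵥ A.map Complex.ofReal *ᵥ v).re < 0 := by
  rw [Complex.re_star_dotProduct_map_ofReal_mulVec]
  refine add_neg_of_ne_zero_or hA hA (by simp) (by simp) ?_
  by_contra! h
  exact hv (funext fun i => Complex.ext (congrFun h.1 i) (congrFun h.2 i))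

lemma sumElim_dotProduct_fromBlocks_mulVec_sumElim {m n R : Type*} [Fintype m] [Fintype n]
    [CommRing R] (P : Matrix m m R) (C : Matrix n m R) (Q : Matrix n n R)
    (a : m → R) (b : n → R) :
    Sum.elim a b ⬝ᵥ fromBlocks P (-Cᵀ) C Q *ᵥ Sum.elim a b = a ⬝ᵥ P *ᵥ a + b ⬝ᵥ Q *ᵥ b := by
  rw [fromBlocks_mulVec, sumElim_dotProduct_sumElim]
  simp only [Sum.elim_comp_inl, Sum.elim_comp_inr, dotProduct_add, neg_mulVec, dotProduct_neg,
    dotProduct_mulVec a Cᵀ, vecMul_transpose, dotProduct_comm (C *ᵥ a) b]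
  ring

lemma dotProduct_fromBlocks_neg_transpose_mulVec_neg {m n : Type*} [Fintype m] [Fintype n]
    {P : Matrix m m ℝ} (C : Matrix n m ℝ) {Q : Matrix n n ℝ}
    (hP : ∀ a : m → ℝ, a ≠ 0 → a ⬝ᵥ P *ᵥ a < 0) (hQ : ∀ b : n → ℝ, b ≠ 0 → b ⬝ᵥ Q *ᵥ b < 0)
    (x : m ⊕ n → ℝ) (hx : x ≠ 0) : x ⬝ᵥ fromBlocks P (-Cᵀ) C Q *ᵥ x < 0 := by
  rw [← Sum.elim_comp_inl_inr x, sumElim_dotProduct_fromBlocks_mulVec_sumElim]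
  refine add_neg_of_ne_zero_or hP hQ (by simp) (by simp) ?_
  by_contra! h
  exact hx (by rw [← Sum.elim_comp_inl_inr x, h.1, h.2]; exact Sum.elim_zero_zero)

theorem stmt_19_general (q : ℕ)
    (B C : Matrix (Fin q) (Fin q) ℝ)
    (hBpos : ∀ x : Fin q → ℝ, x ≠ 0 → 0 < x ⬝ᵥ (B *ᵥ x))
    (σ : ℝ) (hσ : 0 < σ) :
    ∀ μ : ℂ,
      ((Matrix.fromBlocks (-B) (-Cᵀ) C (-σ • B)).map (fun a : ℝ => (a : ℂ))).charpoly.IsRoot μ →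
      μ.re < 0 := by
  intro μ hμ
  have hnegB : ∀ x : Fin q → ℝ, x ≠ 0 → x ⬝ᵥ (-B) *ᵥ x < 0 := fun x hx => by
    simpa [neg_mulVec] using hBpos x hx
  have hnegσB : ∀ x : Fin q → ℝ, x ≠ 0 → x ⬝ᵥ (-σ • B) *ᵥ x < 0 := fun x hx => by
    simpa [smul_mulVec, neg_mulVec] using mul_pos hσ (hBpos x hx)
  have hnegM := dotProduct_fromBlocks_neg_transpose_mulVec_neg C hnegB hnegσB
  exact RCLike.re_lt_zero_of_isRoot_charpoly
    (Complex.re_star_dotProduct_map_ofReal_mulVec_neg hnegM) hμ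

/-- If `B` is symmetric positive definite, `C` is arbitrary, and `σ > 0`, the block
matrix `M_σ = [[−B, −Cᵀ], [C, −σB]]` is Hurwitz: every complex eigenvalue (root of
its characteristic polynomial over `ℂ`) has strictly negative real part. -/
theorem stmt_19 (q : ℕ) (hq : 0 < q)
    (B C : Matrix (Fin q) (Fin q) ℝ)
    (hBsymm : Bᵀ = B)
    (hBpos : ∀ x : Fin q → ℝ, x ≠ 0 → 0 < x ⬝ᵥ (B *ᵥ x))
    (σ : ℝ) (hσ : 0 < σ) :
    ∀ μ : ℂ,
      ((Matrix.fromBlocks (-B) (-Cᵀ) C (-σ • B)).map (fun a : ℝ => (a : ℂ))).charpoly.IsRoot μ →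
      μ.re < 0 :=
  stmt_19_general q B C hBpos σ hσ
end
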